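/- arXiv:0910.2033 — 2 statements merged into one kernel-verified Lean document; each statement's English description precedes it below -/
import Mathlib

section
/- If A is an n×m Boolean matrix and B is an m×n Boolean matrix, neither having a zero line, and both AB and BA are primitive, then |k(AB) − k(BA)| ≤ 1, where k denotes the scrambling index. -/
/-- Boolean matrix product over the Boolean semiring, modeled with `Prop` entries. -/
def bmul {l m n : ℕ} (A : Fin l → Fin m → Prop) (B : Fin m → Fin n → Prop) :
    Fin l → Fin n → Prop := fun i j => ∃ k, A i k ∧ B k j

/-- Transpose of a Boolean matrix. -/
def btrans {m n : ℕ} (A : Fin m → Fin n → Prop) : Fin n → Fin m → Prop := fun i j => A j i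

/-- Boolean matrix power. -/
def bpow {n : ℕ} (A : Fin n → Fin n → Prop) : ℕ → (Fin n → Fin n → Prop)
  | 0 => fun i j => i = j
  | k + 1 => bmul A (bpow A k)

/-- The all-ones Boolean matrix `J`. -/
def bJ {m n : ℕ} : Fin m → Fin n → Prop := fun _ _ => True

/-- A square Boolean matrix is primitive if some positive power is the all-ones matrix. -/
def IsPrimitive {n : ℕ} (A : Fin n → Fin n → Prop) : Prop :=
  ∃ r, 1 ≤ r ∧ bpow A r = bJ

/-- The scrambling index: least `k ≥ 1` with `A^k (Aᵗ)^k = J`. -/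
noncomputable def scram {n : ℕ} (A : Fin n → Fin n → Prop) : ℕ :=
  sInf {k | 1 ≤ k ∧ bmul (bpow A k) (bpow (btrans A) k) = bJ}

/-- The Boolean rank: least `b ≥ 1` admitting a factorization through dimension `b`. -/
noncomputable def brank {n m : ℕ} (M : Fin n → Fin m → Prop) : ℕ :=
  sInf {b | 0 < b ∧ ∃ (A : Fin n → Fin b → Prop) (B : Fin b → Fin m → Prop), M = bmul A B}

/-- `A` has no zero row. -/
def NoZeroRow {m n : ℕ} (A : Fin m → Fin n → Prop) : Prop := ∀ i, ∃ j, A i j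

/-- `A` has no zero column. -/
def NoZeroCol {m n : ℕ} (A : Fin m → Fin n → Prop) : Prop := ∀ j, ∃ i, A i j

/-- The Wielandt matrix `W_b` (0-indexed): arcs `i → i+1`, `b-2 → 0`, `b-1 → 0`. -/
def Wielandt (b : ℕ) : Fin b → Fin b → Prop :=
  fun i j => j.val = i.val + 1 ∨ (i.val = b - 2 ∧ j.val = 0) ∨ (i.val = b - 1 ∧ j.val = 0)

lemma bmul_assoc {a b c d : ℕ} (A : Fin a → Fin b → Prop) (B : Fin b → Fin c → Prop)
    (C : Fin c → Fin d → Prop) : bmul (bmul A B) C = bmul A (bmul B C) := by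
  funext i j
  unfold bmul
  apply propext
  constructor
  · rintro ⟨k, ⟨l, hl1, hl2⟩, hk⟩; exact ⟨l, hl1, k, hl2, hk⟩
  · rintro ⟨l, hl, k, hk1, hk2⟩; exact ⟨k, ⟨l, hl, hk1⟩, hk2⟩

lemma bpow_succ' {N : ℕ} (M : Fin N → Fin N → Prop) (k : ℕ) :
    bpow M (k+1) = bmul (bpow M k) M := by
  induction k with
  | zero => funext i j; simp [bpow, bmul]
  | succ k ih =>
    show bmul M (bpow M (k+1)) = _
    conv_lhs => rw [ih]
    rw [← bmul_assoc]
    rfl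

lemma btrans_bmul {a b c : ℕ} (A : Fin a → Fin b → Prop) (B : Fin b → Fin c → Prop) :
    btrans (bmul A B) = bmul (btrans B) (btrans A) := by
  funext i j
  exact propext (exists_congr fun k => and_comm)

lemma btrans_bpow {N : ℕ} (M : Fin N → Fin N → Prop) (k : ℕ) :
    bpow (btrans M) k = btrans (bpow M k) := by
  induction k with
  | zero => funext i j; exact propext eq_comm
  | succ k ih =>
    show bmul (btrans M) (bpow (btrans M) k) = _
    rw [ih, ← btrans_bmul, ← bpow_succ']

lemma bpow_shift {n m : ℕ} (A : Fin n → Fin m → Prop) (B : Fin m → Fin n → Prop) (k : ℕ) :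
    bpow (bmul A B) (k+1) = bmul A (bmul (bpow (bmul B A) k) B) := by
  induction k with
  | zero => funext i j; simp [bpow, bmul]
  | succ k ih =>
    show bmul (bmul A B) (bpow (bmul A B) (k+1)) = _
    rw [ih]
    show _ = bmul A (bmul (bmul (bmul B A) (bpow (bmul B A) k)) B)
    simp only [bmul_assoc]

lemma scram_key {n m : ℕ} (A : Fin n → Fin m → Prop) (B : Fin m → Fin n → Prop)
    (hAr : NoZeroRow A) (hBr : NoZeroRow B) (hBc : NoZeroCol B)
    (hBA : IsPrimitive (bmul B A)) :
    scram (bmul A B) ≤ scram (bmul B A) + 1 := by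
  by_cases hm : m = 0
  · -- then n = 0 as well, and everything is trivial
    have hn : n = 0 := by
      by_contra hn
      obtain ⟨i, hi⟩ := hBc ⟨0, Nat.pos_of_ne_zero hn⟩
      exact absurd i.isLt (by omega)
    have h1 : scram (bmul A B) ≤ 1 := by
      apply Nat.sInf_le
      refine ⟨le_refl 1, ?_⟩
      funext i
      exact absurd i.isLt (by omega)
    omega
  · set N := bmul B A with hN
    have hmem : scram N ∈ {k | 1 ≤ k ∧ bmul (bpow N k) (bpow (btrans N) k) = bJ} := by
      apply Nat.sInf_mem
      obtain ⟨r, hr1, hr2⟩ := hBA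
      refine ⟨r, hr1, ?_⟩
      rw [btrans_bpow, hr2]
      funext i j
      apply propext
      constructor
      · intro _; trivial
      · intro _
        exact ⟨⟨0, Nat.pos_of_ne_zero hm⟩, trivial, trivial⟩
    obtain ⟨hk1, hkeq⟩ := hmem
    set k := scram N with hkdef
    apply Nat.sInf_le
    refine ⟨by omega, ?_⟩
    funext i j
    apply eq_true
    -- Build witness
    obtain ⟨p, hp⟩ := hAr i
    obtain ⟨p', hp'⟩ := hAr j
    have hq : ∃ q, bpow N k p q ∧ bpow N k p' q := by
      have := congrFun (congrFun hkeq p) p'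
      rw [btrans_bpow] at this
      have h2 : bmul (bpow N k) (btrans (bpow N k)) p p' := this ▸ trivial
      obtain ⟨q, hq1, hq2⟩ := h2
      exact ⟨q, hq1, hq2⟩
    obtain ⟨q, hq1, hq2⟩ := hq
    obtain ⟨l, hl⟩ := hBr q
    refine ⟨l, ?_, ?_⟩
    · rw [bpow_shift]
      exact ⟨p, hp, q, hq1, hl⟩
    · rw [btrans_bpow]
      show bpow (bmul A B) (k+1) j l
      rw [bpow_shift]
      exact ⟨p', hp', q, hq2, hl⟩

theorem scram_mul_comm_diff_le_one {n m : ℕ} (A : Fin n → Fin m → Prop) (B : Fin m → Fin n → Prop)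
    (hAr : NoZeroRow A) (hAc : NoZeroCol A) (hBr : NoZeroRow B) (hBc : NoZeroCol B)
    (hAB : IsPrimitive (bmul A B)) (hBA : IsPrimitive (bmul B A)) :
    scram (bmul A B) ≤ scram (bmul B A) + 1 ∧ scram (bmul B A) ≤ scram (bmul A B) + 1 := by
  exact ⟨scram_key A B hAr hBr hBc hBA, scram_key B A hBr hAr hAc hAB⟩
end

section
/- For the Wielandt matrix W_b with b ≥ 3 and h = ⌈((b−1)²+1)/2⌉, the Boolean matrix W_b^{h−1} (W_b^t)^{h−1} has zero entries exactly in positions (b, ⌊b/2⌋) and (⌊b/2⌋, b), and all other entries equal 1. -/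
lemma bpow_succ_right {n : ℕ} (A : Fin n → Fin n → Prop) (t : ℕ) (i j : Fin n) :
    bpow A (t+1) i j ↔ ∃ k, bpow A t i k ∧ A k j := by
  induction t generalizing i j with
  | zero => simp only [bpow, bmul]; aesop
  | succ t ih =>
    constructor
    · rintro ⟨m, him, hm⟩
      rcases (ih _ _).mp hm with ⟨k, h1, h2⟩
      exact ⟨k, ⟨m, him, h1⟩, h2⟩
    · rintro ⟨k, ⟨m, him, hmk⟩, hkj⟩
      exact ⟨m, him, (ih _ _).mpr ⟨k, hmk, hkj⟩⟩

lemma btrans_bpow_s10 {n : ℕ} (A : Fin n → Fin n → Prop) (t : ℕ) (i j : Fin n) :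
    bpow (btrans A) t i j ↔ bpow A t j i := by
  induction t generalizing i j with
  | zero => simp only [bpow]; exact eq_comm
  | succ t ih =>
    rw [show bpow (btrans A) (t+1) = bmul (btrans A) (bpow (btrans A) t) from rfl,
      bpow_succ_right]
    constructor
    · rintro ⟨k, hk, hkj⟩; exact ⟨k, (ih _ _).mp hkj, hk⟩
    · rintro ⟨k, hjk, hki⟩; exact ⟨k, hki, (ih _ _).mpr hjk⟩

def RPn (a t i k : ℕ) : Prop :=
  if i = a + 1 then (t = 0 ∧ k = a + 1) ∨ ∃ x y, t = k + 1 + x*(a+1) + y*(a+2)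
  else ∃ x y, t + i = k + x*(a+1) + y*(a+2)

lemma step (a t i k : ℕ) (hi : i < a + 2) (hk : k < a + 2) :
    (∃ m, m < a + 2 ∧ (m = i + 1 ∨ (i = a ∧ m = 0) ∨ (i = a + 1 ∧ m = 0)) ∧ RPn a t m k)
      ↔ RPn a (t+1) i k := by
  unfold RPn
  constructor
  · rintro ⟨m, hm, (rfl | ⟨hia, rfl⟩ | ⟨hia, rfl⟩), hR⟩
    · -- m = i + 1
      have hi' : i ≠ a + 1 := by omega
      rw [if_neg hi']
      by_cases h1 : i + 1 = a + 1
      · rw [if_pos h1] at hR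
        rcases hR with ⟨rfl, rfl⟩ | ⟨x, y, he⟩
        · refine ⟨0, 0, ?_⟩
          have h0 : (0:ℕ)*(a+1) = 0 := by ring
          have h0' : (0:ℕ)*(a+2) = 0 := by ring
          have : i = a := by omega
          linarith
        · refine ⟨x, y+1, ?_⟩
          have h' : (y+1)*(a+2) = y*(a+2) + (a+2) := by ring
          have h2 : i = a := by omega
          linarith
      · rw [if_neg h1] at hR
        rcases hR with ⟨x, y, he⟩
        exact ⟨x, y, by linarith⟩
    · -- i = a, m = 0
      rw [if_neg (show (0:ℕ) ≠ a + 1 by omega)] at hR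
      rcases hR with ⟨x, y, he⟩
      rw [if_neg (show i ≠ a + 1 by omega)]
      refine ⟨x+1, y, ?_⟩
      have h' : (x+1)*(a+1) = x*(a+1) + (a+1) := by ring
      linarith
    · -- i = a+1, m = 0
      rw [if_neg (show (0:ℕ) ≠ a + 1 by omega)] at hR
      rcases hR with ⟨x, y, he⟩
      rw [if_pos hia]
      exact Or.inr ⟨x, y, by linarith⟩
  · intro hR
    by_cases hi1 : i = a + 1
    · rw [if_pos hi1] at hR
      rcases hR with ⟨h0, -⟩ | ⟨x, y, he⟩
      · omega
      · refine ⟨0, by omega, Or.inr (Or.inr ⟨hi1, rfl⟩), ?_⟩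
        rw [if_neg (show (0:ℕ) ≠ a + 1 by omega)]
        exact ⟨x, y, by linarith⟩
    · rw [if_neg hi1] at hR
      rcases hR with ⟨x, y, he⟩
      by_cases hia : i = a
      · rcases Nat.eq_zero_or_pos x with rfl | hx
        · rcases Nat.eq_zero_or_pos y with rfl | hy
          · have h0 : (0:ℕ)*(a+1) = 0 := by ring
            have h0' : (0:ℕ)*(a+2) = 0 := by ring
            have ht : t + 1 + i = k := by linarith
            refine ⟨a+1, by omega, Or.inl (by omega), ?_⟩
            rw [if_pos rfl]
            exact Or.inl ⟨by omega, by omega⟩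
          · obtain ⟨y', rfl⟩ : ∃ y', y = y' + 1 := ⟨y - 1, by omega⟩
            refine ⟨a+1, by omega, Or.inl (by omega), ?_⟩
            rw [if_pos rfl]
            refine Or.inr ⟨0, y', ?_⟩
            have h' : (y'+1)*(a+2) = y'*(a+2) + (a+2) := by ring
            have h0 : (0:ℕ)*(a+1) = 0 := by ring
            linarith
        · obtain ⟨x', rfl⟩ : ∃ x', x = x' + 1 := ⟨x - 1, by omega⟩
          refine ⟨0, by omega, Or.inr (Or.inl ⟨hia, rfl⟩), ?_⟩
          rw [if_neg (show (0:ℕ) ≠ a + 1 by omega)]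
          refine ⟨x', y, ?_⟩
          have h' : (x'+1)*(a+1) = x'*(a+1) + (a+1) := by ring
          linarith
      · refine ⟨i+1, by omega, Or.inl rfl, ?_⟩
        rw [if_neg (show i + 1 ≠ a + 1 by omega)]
        exact ⟨x, y, by linarith⟩

lemma reach_iff (a : ℕ) (t : ℕ) (i k : Fin (a+2)) :
    bpow (Wielandt (a+2)) t i k ↔ RPn a t i.val k.val := by
  induction t generalizing i with
  | zero =>
    show (i = k) ↔ _
    unfold RPn
    by_cases hi1 : (i:ℕ) = a + 1
    · rw [if_pos hi1]
      constructor
      · rintro rfl; exact Or.inl ⟨rfl, hi1⟩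
      · rintro (⟨-, hk1⟩ | ⟨x, y, he⟩)
        · exact Fin.ext (by omega)
        · exfalso
          linarith [Nat.zero_le (x*(a+1)), Nat.zero_le (y*(a+2)), Nat.zero_le (k:ℕ)]
    · rw [if_neg hi1]
      constructor
      · rintro rfl
        refine ⟨0, 0, ?_⟩
        have h0 : (0:ℕ)*(a+1) = 0 := by ring
        have h0' : (0:ℕ)*(a+2) = 0 := by ring
        linarith
      · rintro ⟨x, y, he⟩
        have hi3 : (i:ℕ) ≤ a := by omega
        have hx : x = 0 := by
          by_contra hx
          have h1 : 1*(a+1) ≤ x*(a+1) := Nat.mul_le_mul_right _ (by omega)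
          linarith [Nat.zero_le (y*(a+2)), Nat.zero_le (k:ℕ)]
        have hy : y = 0 := by
          by_contra hy
          have h1 : 1*(a+2) ≤ y*(a+2) := Nat.mul_le_mul_right _ (by omega)
          linarith [Nat.zero_le (x*(a+1)), Nat.zero_le (k:ℕ)]
        subst hx; subst hy
        have h0 : (0:ℕ)*(a+1) = 0 := by ring
        have h0' : (0:ℕ)*(a+2) = 0 := by ring
        exact Fin.ext (by omega)
  | succ t ih =>
    show (∃ m, Wielandt (a+2) i m ∧ bpow (Wielandt (a+2)) t m k) ↔ _
    rw [← step a t i.val k.val i.isLt k.isLt]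
    constructor
    · rintro ⟨m, harc, hm⟩
      refine ⟨m.val, m.isLt, ?_, (ih m).mp hm⟩
      simpa [Wielandt] using harc
    · rintro ⟨m, hm, harc, hR⟩
      refine ⟨⟨m, hm⟩, ?_, (ih ⟨m, hm⟩).mpr hR⟩
      simpa [Wielandt] using harc

-- membership helpers, even case (b = 2p+3, a = 2p+1, M = 2p^2+4p+2)
lemma memE1 (p i k : ℕ) (h1 : k ≤ i) (h2 : i ≤ k + p + 1) :
    ∃ x y, 2*p*p+4*p+2 + i = k + x*(2*p+2) + y*(2*p+3) := by
  obtain ⟨d, rfl⟩ : ∃ d, i = k + d := ⟨i - k, by omega⟩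
  rcases Nat.lt_or_ge d (p+1) with hc | hc
  · obtain ⟨f, rfl⟩ : ∃ f, p = d + f := ⟨p - d, by omega⟩
    exact ⟨f+1, d, by ring⟩
  · obtain rfl : d = p + 1 := by omega
    exact ⟨0, p+1, by ring⟩

lemma memE2 (p i k : ℕ) (h1 : i + p + 2 ≤ k) (h2 : k ≤ i + 2*p + 2) :
    ∃ x y, 2*p*p+4*p+2 + i = k + x*(2*p+2) + y*(2*p+3) := by
  obtain ⟨c, rfl⟩ : ∃ c, k = i + p + 2 + c := ⟨k - (i+p+2), by omega⟩
  obtain ⟨f, rfl⟩ : ∃ f, p = c + f := ⟨p - c, by omega⟩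
  exact ⟨c, f, by ring⟩

lemma memES (p k : ℕ) (h1 : p + 1 ≤ k) (h2 : k ≤ 2*p+1) :
    ∃ x y, 2*p*p+4*p+2 = k + 1 + x*(2*p+2) + y*(2*p+3) := by
  obtain ⟨c, rfl⟩ : ∃ c, k = p + 1 + c := ⟨k - (p+1), by omega⟩
  obtain ⟨f, rfl⟩ : ∃ f, p = c + f := ⟨p - c, by omega⟩
  exact ⟨c, f, by ring⟩

-- membership helpers, odd case (b = 2p+4, a = 2p+2, M = 2p^2+6p+4)
lemma memO1 (p i k : ℕ) (h1 : i ≤ k) (h2 : k ≤ i + p + 1) :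
    ∃ x y, 2*p*p+6*p+4 + i = k + x*(2*p+3) + y*(2*p+4) := by
  obtain ⟨d, rfl⟩ : ∃ d, k = i + d := ⟨k - i, by omega⟩
  rcases Nat.lt_or_ge d (p+1) with hc | hc
  · obtain ⟨f, rfl⟩ : ∃ f, p = d + f := ⟨p - d, by omega⟩
    exact ⟨d, f+1, by ring⟩
  · obtain rfl : d = p + 1 := by omega
    exact ⟨p+1, 0, by ring⟩

lemma memO2 (p i k : ℕ) (h1 : k + p + 2 ≤ i) (h2 : i ≤ k + 2*p + 2) :
    ∃ x y, 2*p*p+6*p+4 + i = k + x*(2*p+3) + y*(2*p+4) := by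
  obtain ⟨c, rfl⟩ : ∃ c, i = k + p + 2 + c := ⟨i - (k+p+2), by omega⟩
  obtain ⟨f, rfl⟩ : ∃ f, p = c + f := ⟨p - c, by omega⟩
  exact ⟨f+2, c, by ring⟩

lemma memOS0 (p k : ℕ) (hk : k ≤ p) :
    ∃ x y, 2*p*p+6*p+4 = k + 1 + x*(2*p+3) + y*(2*p+4) := by
  obtain ⟨f, rfl⟩ : ∃ f, p = k + f := ⟨p - k, by omega⟩
  exact ⟨k+1, f, by ring⟩

lemma memOSn (p : ℕ) :
    ∃ x y, 2*p*p+6*p+4 = (2*p+3) + 1 + x*(2*p+3) + y*(2*p+4) :=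
  ⟨0, p, by ring⟩

-- negative lemmas
lemma negE (p k x y x' y' : ℕ) (hk : k ≤ 2*p+2)
    (h1 : 2*p*p+4*p+2 = k + 1 + x*(2*p+2) + y*(2*p+3))
    (h2 : 2*p*p+4*p+2 + p = k + x'*(2*p+2) + y'*(2*p+3)) : False := by
  have r1 : x*(2*p+2) + y*(2*p+3) = (x+y)*(2*p+2) + y := by ring
  have r2 : x'*(2*p+2) + y'*(2*p+3) = (x'+y')*(2*p+2) + y' := by ring
  have h1' : 2*p*p+4*p+2 = k + 1 + (x+y)*(2*p+2) + y := by linarith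
  have h2' : 2*p*p+4*p+2 + p = k + (x'+y')*(2*p+2) + y' := by linarith
  have hy : y ≤ x + y := Nat.le_add_left y x
  have hy' : y' ≤ x' + y' := Nat.le_add_left y' x'
  rcases Nat.lt_trichotomy (x+y) (p+1) with hc | hc | hc
  · rcases Nat.lt_or_ge (x+y) p with hc2 | hc2
    · have hm : (x+y+2)*(2*p+2) ≤ (p+1)*(2*p+2) := Nat.mul_le_mul_right _ (by omega)
      linarith
    · have hce : x + y = p := by omega
      have hm : (x+y+1)*(2*p+2) = (p+1)*(2*p+2) := by rw [hce]
      have hkp : p + 1 ≤ k := by linarith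
      have hku : k ≤ 2*p+1 := by linarith
      rcases Nat.lt_trichotomy (x'+y') (p+1) with hd | hd | hd
      · have hm2 : (x'+y'+1)*(2*p+2) ≤ (p+1)*(2*p+2) := Nat.mul_le_mul_right _ (by omega)
        linarith
      · have hm2 : (x'+y')*(2*p+2) = (p+1)*(2*p+2) := by rw [hd]
        linarith
      · have hm2 : (p+2)*(2*p+2) ≤ (x'+y')*(2*p+2) := Nat.mul_le_mul_right _ (by omega)
        linarith
  · have hm : (x+y)*(2*p+2) = (p+1)*(2*p+2) := by rw [hc]
    linarith
  · have hm : (p+2)*(2*p+2) ≤ (x+y)*(2*p+2) := Nat.mul_le_mul_right _ (by omega)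
    linarith

lemma negO (p k x y x' y' : ℕ) (hk : k ≤ 2*p+3)
    (h1 : 2*p*p+6*p+4 = k + 1 + x*(2*p+3) + y*(2*p+4))
    (h2 : 2*p*p+6*p+4 + (p+1) = k + x'*(2*p+3) + y'*(2*p+4)) : False := by
  have r1 : x*(2*p+3) + y*(2*p+4) = (x+y)*(2*p+3) + y := by ring
  have r2 : x'*(2*p+3) + y'*(2*p+4) = (x'+y')*(2*p+3) + y' := by ring
  have h1' : 2*p*p+6*p+4 = k + 1 + (x+y)*(2*p+3) + y := by linarith
  have h2' : 2*p*p+6*p+4 + (p+1) = k + (x'+y')*(2*p+3) + y' := by linarith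
  have hy : y ≤ x + y := Nat.le_add_left y x
  have hy' : y' ≤ x' + y' := Nat.le_add_left y' x'
  rcases Nat.lt_trichotomy (x+y) (p+1) with hc | hc | hc
  · rcases Nat.lt_or_ge (x+y) p with hc2 | hc2
    · have hm : (x+y+2)*(2*p+3) ≤ (p+1)*(2*p+3) := Nat.mul_le_mul_right _ (by omega)
      linarith
    · -- x+y = p : k = 2p+3 forced
      have hce : x + y = p := by omega
      have hm : (x+y)*(2*p+3) = p*(2*p+3) := by rw [hce]
      have hk2 : k = 2*p+3 := by linarith
      rcases Nat.lt_or_ge (x'+y') (p+1) with hd | hd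
      · have hm2 : (x'+y')*(2*p+3) ≤ p*(2*p+3) := Nat.mul_le_mul_right _ (by omega)
        linarith
      · have hm2 : (p+1)*(2*p+3) ≤ (x'+y')*(2*p+3) := Nat.mul_le_mul_right _ hd
        linarith
  · -- x+y = p+1 : k ≤ p forced
    have hm : (x+y)*(2*p+3) = (p+1)*(2*p+3) := by rw [hc]
    have hk2 : k ≤ p := by linarith
    rcases Nat.lt_or_ge (x'+y') (p+2) with hd | hd
    · have hm2 : (x'+y')*(2*p+3) ≤ (p+1)*(2*p+3) := Nat.mul_le_mul_right _ (by omega)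
      linarith
    · have hm2 : (p+2)*(2*p+3) ≤ (x'+y')*(2*p+3) := Nat.mul_le_mul_right _ hd
      linarith
  · have hm : (p+2)*(2*p+3) ≤ (x+y)*(2*p+3) := Nat.mul_le_mul_right _ (by omega)
    linarith

lemma RP_even (p i k : ℕ) : RPn (2*p+1) (2*p*p+4*p+2) i k ↔
    (if i = 2*p+2 then ∃ x y, 2*p*p+4*p+2 = k + 1 + x*(2*p+2) + y*(2*p+3)
     else ∃ x y, 2*p*p+4*p+2 + i = k + x*(2*p+2) + y*(2*p+3)) := by
  unfold RPn
  have e1 : 2*p+1+1 = 2*p+2 := rfl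
  have e2 : 2*p+1+2 = 2*p+3 := rfl
  rw [e1, e2]
  split_ifs with hcond
  · constructor
    · rintro (⟨h0, -⟩ | hx)
      · exact h0.elim
      · exact hx
    · exact Or.inr
  · exact Iff.rfl

lemma RP_odd (p i k : ℕ) : RPn (2*p+2) (2*p*p+6*p+4) i k ↔
    (if i = 2*p+3 then ∃ x y, 2*p*p+6*p+4 = k + 1 + x*(2*p+3) + y*(2*p+4)
     else ∃ x y, 2*p*p+6*p+4 + i = k + x*(2*p+3) + y*(2*p+4)) := by
  unfold RPn
  have e1 : 2*p+2+1 = 2*p+3 := rfl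
  have e2 : 2*p+2+2 = 2*p+4 := rfl
  rw [e1, e2]
  split_ifs with hcond
  · constructor
    · rintro (⟨h0, -⟩ | hx)
      · exact h0.elim
      · exact hx
    · exact Or.inr
  · exact Iff.rfl

lemma evenPair (p i j : ℕ) (hij : i ≤ j) (hi : i ≤ 2*p+1) (hj : j ≤ 2*p+1) :
    ∃ k, k ≤ 2*p+2 ∧ (∃ x y, 2*p*p+4*p+2 + i = k + x*(2*p+2) + y*(2*p+3))
      ∧ (∃ x y, 2*p*p+4*p+2 + j = k + x*(2*p+2) + y*(2*p+3)) := by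
  rcases Nat.lt_or_ge j (i+p+2) with hc | hc
  · rcases Nat.lt_or_ge j (p+1) with hc2 | hc2
    · exact ⟨0, by omega, memE1 p i 0 (by omega) (by omega), memE1 p j 0 (by omega) (by omega)⟩
    · obtain ⟨c, rfl⟩ : ∃ c, j = c + p + 1 := ⟨j - p - 1, by omega⟩
      exact ⟨c, by omega, memE1 p i c (by omega) (by omega), memE1 p _ c (by omega) (by omega)⟩
  · exact ⟨i+p+2, by omega, memE2 p i _ le_rfl (by omega), memE1 p j _ (by omega) (by omega)⟩

lemma oddPair (p i j : ℕ) (hij : i ≤ j) (hi : i ≤ 2*p+2) (hj : j ≤ 2*p+2) :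
    ∃ k, k ≤ 2*p+3 ∧ (∃ x y, 2*p*p+6*p+4 + i = k + x*(2*p+3) + y*(2*p+4))
      ∧ (∃ x y, 2*p*p+6*p+4 + j = k + x*(2*p+3) + y*(2*p+4)) := by
  rcases Nat.lt_or_ge j (i+p+2) with hc | hc
  · exact ⟨j, by omega, memO1 p i j hij (by omega), memO1 p j j le_rfl (by omega)⟩
  · exact ⟨i, by omega, memO1 p i i le_rfl (by omega), memO2 p j i (by omega) (by omega)⟩

lemma main_even (p : ℕ) (i j : ℕ) (hi : i ≤ 2*p+2) (hj : j ≤ 2*p+2) :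
    (∃ k, k ≤ 2*p+2 ∧ RPn (2*p+1) (2*p*p+4*p+2) i k ∧ RPn (2*p+1) (2*p*p+4*p+2) j k)
      ↔ ¬((i = 2*p+2 ∧ j = p) ∨ (i = p ∧ j = 2*p+2)) := by
  simp only [RP_even]
  constructor
  · rintro ⟨k, hk, h1, h2⟩ hexc
    rcases hexc with ⟨hi2, hj2⟩ | ⟨hi2, hj2⟩
    · rw [if_pos hi2] at h1
      rw [if_neg (by omega : j ≠ 2*p+2)] at h2
      rcases h1 with ⟨x, y, hxy⟩; rcases h2 with ⟨x', y', hxy'⟩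
      rw [hj2] at hxy'
      exact negE p k x y x' y' hk hxy hxy'
    · rw [if_pos hj2] at h2
      rw [if_neg (by omega : i ≠ 2*p+2)] at h1
      rcases h2 with ⟨x, y, hxy⟩; rcases h1 with ⟨x', y', hxy'⟩
      rw [hi2] at hxy'
      exact negE p k x y x' y' hk hxy hxy'
  · intro hexc
    by_cases hi2 : i = 2*p+2 <;> by_cases hj2 : j = 2*p+2
    · refine ⟨p+1, by omega, ?_, ?_⟩ <;>
        · rw [if_pos ‹_›]; exact memES p (p+1) le_rfl (by omega)
    · have hjp : j ≠ p := fun hh => hexc (Or.inl ⟨hi2, hh⟩)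
      rcases Nat.lt_or_ge j (p+1) with hcase | hcase
      · refine ⟨j+p+2, by omega, ?_, ?_⟩
        · rw [if_pos hi2]; exact memES p _ (by omega) (by omega)
        · rw [if_neg hj2]; exact memE2 p j _ le_rfl (by omega)
      · refine ⟨j, by omega, ?_, ?_⟩
        · rw [if_pos hi2]; exact memES p j hcase (by omega)
        · rw [if_neg hj2]; exact memE1 p j j le_rfl (by omega)
    · have hip : i ≠ p := fun hh => hexc (Or.inr ⟨hh, hj2⟩)
      rcases Nat.lt_or_ge i (p+1) with hcase | hcase
      · refine ⟨i+p+2, by omega, ?_, ?_⟩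
        · rw [if_neg hi2]; exact memE2 p i _ le_rfl (by omega)
        · rw [if_pos hj2]; exact memES p _ (by omega) (by omega)
      · refine ⟨i, by omega, ?_, ?_⟩
        · rw [if_neg hi2]; exact memE1 p i i le_rfl (by omega)
        · rw [if_pos hj2]; exact memES p i hcase (by omega)
    · rcases le_total i j with hij | hij
      · obtain ⟨k, hk, hA, hB⟩ := evenPair p i j hij (by omega) (by omega)
        exact ⟨k, hk, by rw [if_neg hi2]; exact hA, by rw [if_neg hj2]; exact hB⟩
      · obtain ⟨k, hk, hA, hB⟩ := evenPair p j i hij (by omega) (by omega)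
        exact ⟨k, hk, by rw [if_neg hi2]; exact hB, by rw [if_neg hj2]; exact hA⟩

lemma main_odd (p : ℕ) (i j : ℕ) (hi : i ≤ 2*p+3) (hj : j ≤ 2*p+3) :
    (∃ k, k ≤ 2*p+3 ∧ RPn (2*p+2) (2*p*p+6*p+4) i k ∧ RPn (2*p+2) (2*p*p+6*p+4) j k)
      ↔ ¬((i = 2*p+3 ∧ j = p+1) ∨ (i = p+1 ∧ j = 2*p+3)) := by
  simp only [RP_odd]
  constructor
  · rintro ⟨k, hk, h1, h2⟩ hexc
    rcases hexc with ⟨hi2, hj2⟩ | ⟨hi2, hj2⟩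
    · rw [if_pos hi2] at h1
      rw [if_neg (by omega : j ≠ 2*p+3)] at h2
      rcases h1 with ⟨x, y, hxy⟩; rcases h2 with ⟨x', y', hxy'⟩
      rw [hj2] at hxy'
      exact negO p k x y x' y' hk hxy hxy'
    · rw [if_pos hj2] at h2
      rw [if_neg (by omega : i ≠ 2*p+3)] at h1
      rcases h2 with ⟨x, y, hxy⟩; rcases h1 with ⟨x', y', hxy'⟩
      rw [hi2] at hxy'
      exact negO p k x y x' y' hk hxy hxy'
  · intro hexc
    by_cases hi2 : i = 2*p+3 <;> by_cases hj2 : j = 2*p+3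
    · refine ⟨2*p+3, by omega, ?_, ?_⟩ <;>
        · rw [if_pos ‹_›]; exact memOSn p
    · have hjp : j ≠ p+1 := fun hh => hexc (Or.inl ⟨hi2, hh⟩)
      rcases Nat.lt_or_ge j (p+1) with hcase | hcase
      · refine ⟨j, by omega, ?_, ?_⟩
        · rw [if_pos hi2]; exact memOS0 p j (by omega)
        · rw [if_neg hj2]; exact memO1 p j j le_rfl (by omega)
      · obtain ⟨c, rfl⟩ : ∃ c, j = c + p + 2 := ⟨j - p - 2, by omega⟩
        refine ⟨c, by omega, ?_, ?_⟩
        · rw [if_pos hi2]; exact memOS0 p c (by omega)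
        · rw [if_neg hj2]; exact memO2 p _ c (by omega) (by omega)
    · have hip : i ≠ p+1 := fun hh => hexc (Or.inr ⟨hh, hj2⟩)
      rcases Nat.lt_or_ge i (p+1) with hcase | hcase
      · refine ⟨i, by omega, ?_, ?_⟩
        · rw [if_neg hi2]; exact memO1 p i i le_rfl (by omega)
        · rw [if_pos hj2]; exact memOS0 p i (by omega)
      · obtain ⟨c, rfl⟩ : ∃ c, i = c + p + 2 := ⟨i - p - 2, by omega⟩
        refine ⟨c, by omega, ?_, ?_⟩
        · rw [if_neg hi2]; exact memO2 p _ c (by omega) (by omega)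
        · rw [if_pos hj2]; exact memOS0 p c (by omega)
    · rcases le_total i j with hij | hij
      · obtain ⟨k, hk, hA, hB⟩ := oddPair p i j hij (by omega) (by omega)
        exact ⟨k, hk, by rw [if_neg hi2]; exact hA, by rw [if_neg hj2]; exact hB⟩
      · obtain ⟨k, hk, hA, hB⟩ := oddPair p j i hij (by omega) (by omega)
        exact ⟨k, hk, by rw [if_neg hi2]; exact hB, by rw [if_neg hj2]; exact hA⟩


theorem wielandt_scram_zero_pattern {b : ℕ} (hb : 3 ≤ b) (h : ℕ)
    (hh : h = ((b - 1) ^ 2 + 2) / 2) :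
    ∀ i j : Fin b,
      bmul (bpow (Wielandt b) (h - 1)) (bpow (btrans (Wielandt b)) (h - 1)) i j ↔
        ¬ ((i.val = b - 1 ∧ j.val = b / 2 - 1) ∨ (i.val = b / 2 - 1 ∧ j.val = b - 1)) := by
  obtain ⟨a, rfl⟩ : ∃ a, b = a + 2 := ⟨b - 2, by omega⟩
  intro i j
  show (∃ k, bpow (Wielandt (a+2)) (h-1) i k ∧ bpow (btrans (Wielandt (a+2))) (h-1) k j) ↔ _
  have step1 : (∃ k, bpow (Wielandt (a+2)) (h-1) i k ∧ bpow (btrans (Wielandt (a+2))) (h-1) k j)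
      ↔ (∃ k : Fin (a+2), RPn a (h-1) i.val k.val ∧ RPn a (h-1) j.val k.val) := by
    constructor
    · rintro ⟨k, h1, h2⟩
      exact ⟨k, (reach_iff a _ i k).mp h1, (reach_iff a _ j k).mp ((btrans_bpow_s10 _ _ _ _).mp h2)⟩
    · rintro ⟨k, h1, h2⟩
      exact ⟨k, (reach_iff a _ i k).mpr h1,
        (btrans_bpow_s10 _ _ _ _).mpr ((reach_iff a _ j k).mpr h2)⟩
  rw [step1]
  obtain ⟨p, hp⟩ : ∃ p, a = 2*p+1 ∨ a = 2*p+2 := ⟨(a-1)/2, by omega⟩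
  rcases hp with rfl | rfl
  · -- even b-1 = 2p+2
    have hM : h - 1 = 2*p*p+4*p+2 := by
      have e0 : 2*p+1+2-1 = 2*p+2 := by omega
      rw [e0] at hh
      have e1 : (2*p+2)^2 = 4*(p*p)+8*p+4 := by ring
      rw [e1] at hh
      obtain ⟨P, hP⟩ : ∃ P, p*p = P := ⟨_, rfl⟩
      rw [hP] at hh
      have : h - 1 = 2*P+4*p+2 := by omega
      rw [this, ← hP]; ring
    rw [hM]
    have c1 : 2*p+1+2-1 = 2*p+2 := by omega
    have c2 : (2*p+1+2)/2-1 = p := by omega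
    rw [c1, c2]
    constructor
    · rintro ⟨k, h1, h2⟩
      exact (main_even p i.val j.val (by omega) (by omega)).mp
        ⟨k.val, by omega, h1, h2⟩
    · intro hexc
      obtain ⟨k, hk, h1, h2⟩ := (main_even p i.val j.val (by omega) (by omega)).mpr hexc
      exact ⟨⟨k, by omega⟩, h1, h2⟩
  · -- odd b-1 = 2p+3
    have hM : h - 1 = 2*p*p+6*p+4 := by
      have e0 : 2*p+2+2-1 = 2*p+3 := by omega
      rw [e0] at hh
      have e1 : (2*p+3)^2 = 4*(p*p)+12*p+9 := by ring
      rw [e1] at hh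
      obtain ⟨P, hP⟩ : ∃ P, p*p = P := ⟨_, rfl⟩
      rw [hP] at hh
      have : h - 1 = 2*P+6*p+4 := by omega
      rw [this, ← hP]; ring
    rw [hM]
    have c1 : 2*p+2+2-1 = 2*p+3 := by omega
    have c2 : (2*p+2+2)/2-1 = p+1 := by omega
    rw [c1, c2]
    constructor
    · rintro ⟨k, h1, h2⟩
      exact (main_odd p i.val j.val (by omega) (by omega)).mp
        ⟨k.val, by omega, h1, h2⟩
    · intro hexc
      obtain ⟨k, hk, h1, h2⟩ := (main_odd p i.val j.val (by omega) (by omega)).mpr hexc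
      exact ⟨⟨k, by omega⟩, h1, h2⟩
end
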